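/- For the expansion in Kummer functions with fixed lower parameter: let ε ≠ 0 and consider the polynomial in n given by (α/ε - 1 + n)(δ - 1 + n)∏_{k=1}^N(e_k + n) + Q_{n-1}∏_{k=1}^N(e_k - 1 + n) + (α/ε - γ - 1 + n)(n-1)∏_{k=1}^N(e_k - 2 + n), where Q_n = -q + nγ + (α/ε + n)(ε - δ - 2n). Then the coefficient of n^{N+2} vanishes and the coefficient of n^{N+1} equals ε; consequently, since ε ≠ 0, this polynomial is never identically zero. -/

import Mathlib

/-!
Each product `∏ (n + e_k - t)` is monic of degree `N` with next coefficient `∑ e_k - N t`, so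
multiplying it by a quadratic `a n² + b n + c` gives coefficient `a` at `n^{N+2}` and
`b + a (∑ e_k - N t)` at `n^{N+1}`. The three quadratics have leading coefficients `1, -2, 1`,
which sum to zero: this kills the coefficient of `n^{N+2}` and the `∑ e_k` terms, the shifts
contribute `-2 · (-N) + 1 · (-2N) = 0`, and what remains is the sum of the linear coefficients,
which is `ε`.
-/

open Polynomial Finset

namespace Polynomial

section Semiring

variable {R : Type*} [CommSemiring R]

theorem Monic.coeff_quadratic_mul_of_natDegree_eq_add_two {q : R[X]} {n : ℕ} (hq : q.Monic)
    (hn : q.natDegree = n) (a b c : R) :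
    ((C a * X ^ 2 + C b * X + C c) * q).coeff (n + 2) = a := by
  have hq1 : q.coeff (n + 1) = 0 := coeff_eq_zero_of_natDegree_lt (by omega)
  have hq2 : q.coeff (n + 2) = 0 := coeff_eq_zero_of_natDegree_lt (by omega)
  have hlead : q.coeff n = 1 := hn ▸ hq.coeff_natDegree
  simp only [add_mul, mul_assoc, coeff_add, coeff_C_mul, X_pow_mul, X_mul, coeff_mul_X_pow,
    coeff_mul_X, hlead, hq1, hq2]
  ring

theorem Monic.coeff_quadratic_mul_of_natDegree_eq_add_one {q : R[X]} {n : ℕ} (hq : q.Monic)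
    (hn : q.natDegree = n) (a b c : R) :
    ((C a * X ^ 2 + C b * X + C c) * q).coeff (n + 1) = b + a * q.nextCoeff := by
  have hq1 : q.coeff (n + 1) = 0 := coeff_eq_zero_of_natDegree_lt (by omega)
  have hX2 : (q * X ^ 2).coeff (n + 1) = q.nextCoeff := by
    rcases n with _ | n
    · rw [nextCoeff, if_pos hn, coeff_mul_X_pow', if_neg (by omega)]
    · rw [nextCoeff_of_natDegree_pos (by omega), hn, coeff_mul_X_pow', if_pos (by omega)]
      rfl
  have hlead : q.coeff n = 1 := hn ▸ hq.coeff_natDegree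
  simp only [add_mul, mul_assoc, coeff_add, coeff_C_mul, X_pow_mul, X_mul, coeff_mul_X, hX2,
    hlead, hq1]
  ring

theorem monic_C_add_X (c : R) : (C c + X).Monic := by
  simpa only [add_comm] using monic_X_add_C c

variable {ι : Type*} (s : Finset ι) (f : ι → R)

theorem monic_prod_C_add_X : (∏ i ∈ s, (C (f i) + X)).Monic :=
  monic_prod_of_monic _ _ fun i _ => monic_C_add_X (f i)

theorem natDegree_prod_C_add_X [Nontrivial R] : (∏ i ∈ s, (C (f i) + X)).natDegree = #s := by
  rw [natDegree_prod_of_monic _ _ fun i _ => monic_C_add_X (f i)]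
  simp [add_comm (C _)]

theorem nextCoeff_prod_C_add_X : (∏ i ∈ s, (C (f i) + X)).nextCoeff = ∑ i ∈ s, f i := by
  rw [Monic.nextCoeff_prod _ _ fun i _ => monic_C_add_X (f i)]
  simp [add_comm (C _), nextCoeff_X_add_C]

end Semiring

section ShiftedProduct

variable {R : Type*} [CommRing R] [Nontrivial R] (e : ℕ → R) (N : ℕ) (t a b c : R)

theorem coeff_quadratic_mul_prod_Icc_C_sub_add_X_add_two :
    ((C a * X ^ 2 + C b * X + C c) * ∏ k ∈ Icc 1 N, (C (e k - t) + X)).coeff (N + 2) = a :=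
  (monic_prod_C_add_X _ _).coeff_quadratic_mul_of_natDegree_eq_add_two
    (by rw [natDegree_prod_C_add_X, Nat.card_Icc, Nat.add_sub_cancel]) a b c

theorem coeff_quadratic_mul_prod_Icc_C_sub_add_X_add_one :
    ((C a * X ^ 2 + C b * X + C c) * ∏ k ∈ Icc 1 N, (C (e k - t) + X)).coeff (N + 1)
      = b + a * (∑ k ∈ Icc 1 N, e k - N * t) := by
  rw [(monic_prod_C_add_X _ _).coeff_quadratic_mul_of_natDegree_eq_add_one
    (by rw [natDegree_prod_C_add_X, Nat.card_Icc, Nat.add_sub_cancel]), nextCoeff_prod_C_add_X,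
    sum_sub_distrib, sum_const, Nat.card_Icc, Nat.add_sub_cancel, nsmul_eq_mul]

end ShiftedProduct

end Polynomial

/-- For the expansion with fixed lower parameter γ (section 2.2), the reduced
polynomial has vanishing coefficient of n^{N+2}, its coefficient of n^{N+1} equals ε,
and hence (since ε ≠ 0) it is never identically zero. -/
theorem stmt5 (N : ℕ) (α γ δ ε q : ℂ) (hε : ε ≠ 0) (e : ℕ → ℂ) :
    ((C (α / ε - 1) + X) * (C (δ - 1) + X) * ∏ k ∈ Icc 1 N, (C (e k) + X)
      + (C (-q) + (X - 1) * C γ + (C (α / ε - 1) + X) * (C (ε - δ + 2) - 2 * X)) *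
          ∏ k ∈ Icc 1 N, (C (e k - 1) + X)
      + (C (α / ε - γ - 1) + X) * (X - 1) *
          ∏ k ∈ Icc 1 N, (C (e k - 2) + X) : ℂ[X]).coeff (N + 2) = 0
    ∧ ((C (α / ε - 1) + X) * (C (δ - 1) + X) * ∏ k ∈ Icc 1 N, (C (e k) + X)
      + (C (-q) + (X - 1) * C γ + (C (α / ε - 1) + X) * (C (ε - δ + 2) - 2 * X)) *
          ∏ k ∈ Icc 1 N, (C (e k - 1) + X)
      + (C (α / ε - γ - 1) + X) * (X - 1) *
          ∏ k ∈ Icc 1 N, (C (e k - 2) + X) : ℂ[X]).coeff (N + 1) = ε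
    ∧ ((C (α / ε - 1) + X) * (C (δ - 1) + X) * ∏ k ∈ Icc 1 N, (C (e k) + X)
      + (C (-q) + (X - 1) * C γ + (C (α / ε - 1) + X) * (C (ε - δ + 2) - 2 * X)) *
          ∏ k ∈ Icc 1 N, (C (e k - 1) + X)
      + (C (α / ε - γ - 1) + X) * (X - 1) *
          ∏ k ∈ Icc 1 N, (C (e k - 2) + X) : ℂ[X]) ≠ 0 := by
  have hP0 : ∏ k ∈ Icc 1 N, (C (e k) + X) = ∏ k ∈ Icc 1 N, (C (e k - 0) + X) := by
    simp only [sub_zero]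
  have hA : (C (α / ε - 1) + X) * (C (δ - 1) + X)
      = C 1 * X ^ 2 + C (α / ε + δ - 2) * X + C ((α / ε - 1) * (δ - 1)) := by
    simp only [map_mul, map_add, map_sub, map_one, map_ofNat]; ring
  have hB : C (-q) + (X - 1) * C γ + (C (α / ε - 1) + X) * (C (ε - δ + 2) - 2 * X)
      = C (-2) * X ^ 2 + C (γ + ε - δ + 4 - 2 * (α / ε)) * X
        + C (-q - γ + (α / ε - 1) * (ε - δ + 2)) := by
    simp only [map_mul, map_add, map_sub, map_one, map_neg, map_ofNat]; ring
  have hD : (C (α / ε - γ - 1) + X) * (X - 1)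
      = C 1 * X ^ 2 + C (α / ε - γ - 2) * X + C (γ + 1 - α / ε) := by
    simp only [map_add, map_sub, map_one, map_ofNat]; ring
  rw [hP0, hA, hB, hD]
  refine ⟨?_, (and_iff_left_of_imp fun h h0 => hε ?_).2 ?_⟩
  · simp only [coeff_add, coeff_quadratic_mul_prod_Icc_C_sub_add_X_add_two]
    ring
  · rw [← h, h0, coeff_zero]
  · simp only [coeff_add, coeff_quadratic_mul_prod_Icc_C_sub_add_X_add_one]
    ring
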